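/- Critical fractional Gagliardo–Sobolev inequality (inequality (eq:gagliardo), Section 7). Let d ≥ 1 and α ∈ (0,1); set γ = (α + d − 1)/d, so that 1/γ = d/(d − 1 + α). For every f ∈ L¹([0,1]^d) with V̂^α f < ∞, one has f ∈ L^{1/γ}([0,1]^d) and ‖f‖_{L^{1/γ}([0,1]^d)} ≤ V̂^α f. -/

import Mathlib

open MeasureTheory Filter
open scoped BigOperators ENNReal Classical

noncomputable section

/-- Points of `ℝ^d` with the Euclidean norm. -/
abbrev Euc (d : ℕ) := EuclideanSpace ℝ (Fin d)

/-- The closed dyadic cube of generation `n` with lower corner `2^{-n} k` inside `[0,1]^d`. -/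
def dyCube (d n : ℕ) (k : Fin d → ℕ) : Set (Euc d) :=
  {x | ∀ i, (k i : ℝ) / 2 ^ n ≤ x i ∧ x i ≤ ((k i : ℝ) + 1) / 2 ^ n}

/-- The unit cube `[0,1]^d`. -/
def uCube (d : ℕ) : Set (Euc d) := dyCube d 0 (fun _ => 0)

/-- Volume `2^{-nd}` of a dyadic cube of generation `n`. -/
def dyVol (d n : ℕ) : ℝ := ((2 : ℝ) ^ (n * d))⁻¹

/-- A real valued function on the dyadic cubes of `[0,1]^d` (encoded by generation and
lower-corner index) is additive if its value on each cube is the sum of its values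
on the `2^d` children. -/
def IsAdditiveDy (d : ℕ) (ω : ∀ _ : ℕ, (Fin d → ℕ) → ℝ) : Prop :=
  ∀ n (k : Fin d → ℕ), (∀ i, k i < 2 ^ n) →
    ω n k = ∑ j : Fin d → Fin 2, ω (n + 1) (fun i => 2 * k i + (j i : ℕ))

/-- The Haar function `g_{n,k,ε}` on `[0,1]^d`. -/
def haarF (d n : ℕ) (k : Fin d → ℕ) (ε : Fin d → Bool) (x : Euc d) : ℝ :=
  if ∀ i, (k i : ℝ) / 2 ^ n ≤ x i ∧ x i < ((k i : ℝ) + 1) / 2 ^ n then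
    (2 : ℝ) ^ (((n * d : ℕ) : ℝ) / 2) *
      ∏ i, (if ε i then (if (2 : ℝ) ^ n * x i - (k i : ℝ) < 1 / 2 then (1 : ℝ) else -1) else 1)
  else 0

/-- The Faber–Schauder coefficient `a_{n,k,ε}(ω)` of an additive function on dyadic cubes. -/
def fsCoeff (d : ℕ) (ω : ∀ _ : ℕ, (Fin d → ℕ) → ℝ) (n : ℕ) (k : Fin d → ℕ)
    (ε : Fin d → Bool) : ℝ :=
  (2 : ℝ) ^ (((n * d : ℕ) : ℝ) / 2) *
    ∑ j : Fin d → Fin 2,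
      (∏ i, (if ε i then (if j i = 0 then (1 : ℝ) else -1) else 1)) *
        ω (n + 1) (fun i => 2 * k i + (j i : ℕ))


/-- The variation `V̂^α f ∈ [0,∞]`: supremum of `∫ f g` over `g ∈ L^∞([0,1]^d)` with
`|∫_K g| ≤ |K|^γ` for every dyadic cube `K`, where `γ = (α + d - 1)/d`. -/
def hatV (d : ℕ) (α : ℝ) (f : Euc d → ℝ) : ℝ≥0∞ :=
  ⨆ (g : Euc d → ℝ) (_ : MemLp g ⊤ (volume.restrict (uCube d)))
    (_ : ∀ n (k : Fin d → ℕ), (∀ i, k i < 2 ^ n) →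
      |∫ x in dyCube d n k, g x| ≤ dyVol d n ^ ((α + (d : ℝ) - 1) / d)),
    ENNReal.ofReal (∫ x in uCube d, f x * g x)

/-! ### Auxiliary lemmas -/

lemma dyCube_eq (d n : ℕ) (k : Fin d → ℕ) :
    dyCube d n k = (MeasurableEquiv.toLp 2 (Fin d → ℝ)).symm ⁻¹'
      (Set.univ.pi fun i => Set.Icc ((k i : ℝ) / 2 ^ n) (((k i : ℝ) + 1) / 2 ^ n)) := by
  ext x
  simp [dyCube, Set.mem_pi, Pi.le_def, forall_and,
    MeasurableEquiv.coe_toLp_symm]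

lemma measurableSet_dyCube (d n : ℕ) (k : Fin d → ℕ) : MeasurableSet (dyCube d n k) := by
  rw [dyCube_eq]
  exact (MeasurableEquiv.toLp 2 (Fin d → ℝ)).symm.measurable
    (MeasurableSet.univ_pi fun i => measurableSet_Icc)

lemma volume_dyCube (d n : ℕ) (k : Fin d → ℕ) :
    volume (dyCube d n k) = ENNReal.ofReal (dyVol d n) := by
  rw [dyCube_eq, (EuclideanSpace.volume_preserving_symm_measurableEquiv_toLp (Fin d)).measure_preimage
    ((MeasurableSet.univ_pi fun i => measurableSet_Icc).nullMeasurableSet)]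
  rw [volume_pi_pi]
  have : ∀ i : Fin d, volume (Set.Icc ((k i : ℝ) / 2 ^ n) (((k i : ℝ) + 1) / 2 ^ n))
      = ENNReal.ofReal (((2:ℝ) ^ n)⁻¹) := by
    intro i
    rw [Real.volume_Icc]
    ring_nf
  simp only [this, Finset.prod_const, Finset.card_univ, Fintype.card_fin]
  rw [← ENNReal.ofReal_pow (by positivity), dyVol]
  congr 1
  rw [inv_pow, ← pow_mul]

lemma dyVol_pos (d n : ℕ) : 0 < dyVol d n := by
  unfold dyVol; positivity

lemma volume_uCube (d : ℕ) : volume (uCube d) = 1 := by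
  rw [uCube, volume_dyCube]
  simp [dyVol]

lemma dyCube_subset_uCube (d n : ℕ) (k : Fin d → ℕ) (hk : ∀ i, k i < 2 ^ n) :
    dyCube d n k ⊆ uCube d := by
  intro x hx i
  obtain ⟨h1, h2⟩ := hx i
  have h2n : (0:ℝ) < 2 ^ n := by positivity
  constructor
  · simp only [Nat.cast_zero, pow_zero, zero_div]
    exact le_trans (by positivity) h1
  · simp only [Nat.cast_zero, pow_zero, zero_add, div_one]
    refine le_trans h2 ?_
    rw [div_le_one h2n]
    have : (k i : ℝ) + 1 ≤ ((2:ℝ) ^ n) := by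
      have := hk i
      exact_mod_cast Nat.succ_le_of_lt this
    simpa using this

/-- **Critical fractional Gagliardo–Sobolev inequality** (Section 7), with
`γ = (α + d - 1)/d` and exponent `1/γ = d/(d - 1 + α)`. -/
theorem fractional_gagliardo_sobolev (d : ℕ) (hd : 0 < d) (α : ℝ)
    (hα0 : 0 < α) (hα1 : α < 1)
    (f : Euc d → ℝ) (hf : IntegrableOn f (uCube d)) (hV : hatV d α f < ⊤) :
    MemLp f (ENNReal.ofReal (1 / ((α + (d : ℝ) - 1) / d))) (volume.restrict (uCube d)) ∧
      eLpNorm f (ENNReal.ofReal (1 / ((α + (d : ℝ) - 1) / d))) (volume.restrict (uCube d)) ≤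
        hatV d α f := by
  set μ := volume.restrict (uCube d) with hμ
  have hd1 : (1:ℝ) ≤ d := by exact_mod_cast hd
  set γr : ℝ := (α + (d : ℝ) - 1) / d with hγr
  have hγ0 : 0 < γr := by
    apply div_pos (by linarith) (by linarith)
  have hγ1 : γr < 1 := by
    rw [hγr, div_lt_one (by linarith)]
    linarith
  set p : ℝ := 1 / γr with hp
  set q : ℝ := 1 / (1 - γr) with hq
  have hp1 : 1 < p := one_lt_one_div hγ0 hγ1
  have hp0 : 0 < p := lt_trans one_pos hp1
  have hpne : p ≠ 0 := ne_of_gt hp0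
  have hpγ : 1 / p = γr := by rw [hp, one_div_one_div]
  have hq0 : 0 < q := by
    apply one_div_pos.mpr; linarith
  have conj : p.HolderConjugate q := by
    refine Real.holderConjugate_iff.mpr ⟨hp1, ?_⟩
    rw [← one_div, ← one_div, hpγ, hq, one_div_one_div]
    ring
  have hsum : 1/p + 1/q = 1 := by
    rw [one_div, one_div]; exact conj.inv_add_inv_eq_inv.trans inv_one
  have hpm1 : 0 < p - 1 := by linarith
  have hrpm : ∀ (u : Euc d → ℝ), Measurable u → ∀ (r : ℝ), 0 ≤ r →
      Measurable (fun x => u x ^ r) := fun u hu r hr =>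
    (Real.continuous_rpow_const hr).measurable.comp hu
  haveI : IsFiniteMeasure μ := by
    constructor
    rw [hμ, Measure.restrict_apply_univ, volume_uCube]
    exact ENNReal.one_lt_top
  -- measurable representative
  have hfm := hf.1
  set f' : Euc d → ℝ := hfm.mk f with hf'def
  have hf'sm : StronglyMeasurable f' := hfm.stronglyMeasurable_mk
  have hf'm : Measurable f' := hf'sm.measurable
  have hff' : f =ᵐ[μ] f' := hfm.ae_eq_mk
  -- the key estimate for truncations
  have key : ∀ N : ℕ,
      (∫⁻ x, (ENNReal.ofReal (min |f' x| N)) ^ p ∂μ) ≤ (hatV d α f) ^ p := by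
    intro N
    set h : Euc d → ℝ := fun x => min |f' x| N with hhdef
    have hh0 : ∀ x, 0 ≤ h x := fun x => le_min (abs_nonneg _) (Nat.cast_nonneg _)
    have hhN : ∀ x, h x ≤ N := fun x => min_le_right _ _
    have hhm : Measurable h := (hf'm.abs).min measurable_const
    set A : ℝ≥0∞ := ∫⁻ x, (ENNReal.ofReal (h x)) ^ p ∂μ with hA
    have hAtop : A ≠ ⊤ := by
      have hb : ∀ x, (ENNReal.ofReal (h x)) ^ p ≤ (ENNReal.ofReal (N:ℝ)) ^ p := by
        intro x
        exact ENNReal.rpow_le_rpow (ENNReal.ofReal_le_ofReal (hhN x)) hp0.le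
      have : A ≤ (ENNReal.ofReal (N:ℝ)) ^ p * μ Set.univ := by
        calc A ≤ ∫⁻ _, (ENNReal.ofReal (N:ℝ)) ^ p ∂μ := lintegral_mono fun x => hb x
        _ = (ENNReal.ofReal (N:ℝ)) ^ p * μ Set.univ := lintegral_const _
      refine ne_top_of_le_ne_top ?_ this
      exact ENNReal.mul_ne_top (ENNReal.rpow_ne_top_of_nonneg hp0.le ENNReal.ofReal_ne_top)
        (measure_ne_top μ _)
    by_cases hA0 : A = 0
    · rw [hA0]; exact zero_le
    -- the dual test function
    have hAr : 0 < A.toReal := ENNReal.toReal_pos hA0 hAtop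
    set Ar : ℝ := A.toReal with hArdef
    set c : ℝ := Ar ^ (-(1/q)) with hc
    have hc0 : 0 < c := Real.rpow_pos_of_pos hAr _
    set g : Euc d → ℝ := fun x => (if 0 ≤ f' x then (1:ℝ) else -1) * (h x ^ (p-1) * c)
      with hgdef
    have hgm : Measurable g := by
      apply Measurable.mul
      · exact Measurable.ite (measurableSet_le measurable_const hf'm)
          measurable_const measurable_const
      · exact (hrpm h hhm (p-1) hpm1.le).mul_const c
    have hgabs : ∀ x, |g x| = h x ^ (p-1) * c := by
      intro x
      rw [hgdef]
      simp only
      rw [abs_mul]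
      have h1 : |if 0 ≤ f' x then (1:ℝ) else -1| = 1 := by
        split <;> simp
      rw [h1, one_mul, abs_of_nonneg (by positivity)]
    have hgbd : ∀ x, ‖g x‖ ≤ (N:ℝ) ^ (p-1) * c := by
      intro x
      rw [Real.norm_eq_abs, hgabs x]
      exact mul_le_mul_of_nonneg_right
        (Real.rpow_le_rpow (hh0 x) (hhN x) hpm1.le) hc0.le
    have hg1 : MemLp g ⊤ μ :=
      memLp_top_of_bound hgm.aestronglyMeasurable _ (ae_of_all _ hgbd)
    -- ofReal |g| as an ENNReal function
    have hgofReal : ∀ x, ENNReal.ofReal ‖g x‖ =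
        (ENNReal.ofReal (h x)) ^ (p-1) * ENNReal.ofReal c := by
      intro x
      rw [Real.norm_eq_abs, hgabs x, ENNReal.ofReal_mul (by positivity),
        ENNReal.ofReal_rpow_of_nonneg (hh0 x) hpm1.le]
    -- dyadic admissibility
    have hg2 : ∀ n (kk : Fin d → ℕ), (∀ i, kk i < 2 ^ n) →
        |∫ x in dyCube d n kk, g x| ≤ dyVol d n ^ ((α + (d : ℝ) - 1) / d) := by
      intro n kk hkk
      set ν := volume.restrict (dyCube d n kk) with hν
      have hνμ : ν ≤ μ := Measure.restrict_mono (dyCube_subset_uCube d n kk hkk) le_rfl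
      have step1 : |∫ x in dyCube d n kk, g x| ≤
          (∫⁻ x, ENNReal.ofReal ‖g x‖ ∂ν).toReal := by
        rw [← Real.norm_eq_abs]
        exact norm_integral_le_lintegral_norm g
      have hconj' : q.HolderConjugate p := conj.symm
      have holder : (∫⁻ x, (ENNReal.ofReal (h x)) ^ (p-1) ∂ν)
          ≤ A ^ (1/q) * (ENNReal.ofReal (dyVol d n)) ^ (1/p) := by
        have hH := ENNReal.lintegral_mul_le_Lp_mul_Lq ν hconj'
          (f := fun x => (ENNReal.ofReal (h x)) ^ (p-1)) (g := fun _ => 1)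
          ((hhm.ennreal_ofReal.pow_const _).aemeasurable) aemeasurable_const
        simp only [Pi.mul_apply, mul_one, ENNReal.one_rpow, lintegral_one] at hH
        have hνuniv : ν Set.univ = ENNReal.ofReal (dyVol d n) := by
          rw [hν, Measure.restrict_apply_univ, volume_dyCube]
        rw [hνuniv] at hH
        refine le_trans hH ?_
        apply mul_le_mul_left
        apply ENNReal.rpow_le_rpow _ (le_of_lt hconj'.one_div_pos)
        have hexp : ∀ x, ((ENNReal.ofReal (h x)) ^ (p-1)) ^ q
            = (ENNReal.ofReal (h x)) ^ p := by
          intro x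
          rw [← ENNReal.rpow_mul]
          congr 1
          exact conj.sub_one_mul_conj
        calc (∫⁻ x, ((ENNReal.ofReal (h x)) ^ (p-1)) ^ q ∂ν)
            = ∫⁻ x, (ENNReal.ofReal (h x)) ^ p ∂ν := by
              exact lintegral_congr fun x => hexp x
          _ ≤ A := by rw [hA]; exact lintegral_mono' hνμ le_rfl
      have step2 : (∫⁻ x, ENNReal.ofReal ‖g x‖ ∂ν)
          ≤ ENNReal.ofReal (dyVol d n ^ γr) := by
        calc (∫⁻ x, ENNReal.ofReal ‖g x‖ ∂ν)
            = (∫⁻ x, (ENNReal.ofReal (h x)) ^ (p-1) ∂ν) * ENNReal.ofReal c := by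
              simp_rw [hgofReal]
              exact lintegral_mul_const'' _ ((hhm.ennreal_ofReal.pow_const _).aemeasurable)
          _ ≤ (A ^ (1/q) * (ENNReal.ofReal (dyVol d n)) ^ (1/p)) * ENNReal.ofReal c :=
              mul_le_mul_left holder _
          _ = (ENNReal.ofReal c * A ^ (1/q)) * (ENNReal.ofReal (dyVol d n)) ^ (1/p) := by
              ring
          _ = ENNReal.ofReal (dyVol d n ^ γr) := by
              have hA' : A = ENNReal.ofReal Ar := (ENNReal.ofReal_toReal hAtop).symm
              have hAne0 : ENNReal.ofReal Ar ≠ 0 := ne_of_gt (ENNReal.ofReal_pos.mpr hAr)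
              rw [hA', hc, ← ENNReal.ofReal_rpow_of_pos hAr,
                ← ENNReal.rpow_add _ _ hAne0 ENNReal.ofReal_ne_top, neg_add_cancel,
                ENNReal.rpow_zero, one_mul, ← ENNReal.ofReal_rpow_of_pos (dyVol_pos d n), hpγ]
      refine le_trans step1 ?_
      have := ENNReal.toReal_mono (by simp) step2
      rwa [ENNReal.toReal_ofReal (Real.rpow_nonneg (dyVol_pos d n).le _)] at this
    -- lower bound for the pairing
    have hfg_ae : ∀ᵐ x ∂μ, h x ^ p * c ≤ f x * g x := by
      filter_upwards [hff'] with x hx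
      rw [hx]
      have e1 : f' x * g x = |f' x| * (h x ^ (p-1) * c) := by
        rw [hgdef]
        simp only
        rw [← mul_assoc]
        congr 1
        split <;> rename_i hcase
        · rw [abs_of_nonneg hcase]; ring
        · rw [abs_of_neg (lt_of_not_ge hcase)]; ring
      rw [e1]
      have e2 : h x ^ p = h x * h x ^ (p-1) := by
        have : p = 1 + (p-1) := by ring
        rw [this, Real.rpow_add' (hh0 x) (by linarith)]
        rw [Real.rpow_one]
        ring_nf
      rw [e2, mul_assoc]
      apply mul_le_mul_of_nonneg_right (min_le_left _ _)
      positivity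
    have hI2 : Integrable (fun x => h x ^ p * c) μ := by
      apply MemLp.integrable le_top
      apply memLp_top_of_bound (((hrpm h hhm p hp0.le).mul_const c).aestronglyMeasurable)
        ((N:ℝ) ^ p * c)
      apply ae_of_all
      intro x
      rw [Real.norm_eq_abs, abs_of_nonneg (by positivity)]
      exact mul_le_mul_of_nonneg_right (Real.rpow_le_rpow (hh0 x) (hhN x) hp0.le) hc0.le
    have hI1 : Integrable (fun x => f x * g x) μ := by
      have := Integrable.bdd_mul hf hgm.aestronglyMeasurable (ae_of_all _ hgbd)
      exact this.congr (ae_of_all _ fun x => mul_comm _ _)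
    have pairing : Ar ^ (1/p) ≤ ∫ x in uCube d, f x * g x := by
      have h1 : ∫ x, (h x ^ p * c) ∂μ = Ar * c := by
        rw [integral_mul_const]
        congr 1
        rw [integral_eq_lintegral_of_nonneg_ae (ae_of_all _ fun x => by positivity)
          ((hrpm h hhm p hp0.le).aestronglyMeasurable)]
        congr 1
        apply lintegral_congr
        intro x
        rw [ENNReal.ofReal_rpow_of_nonneg (hh0 x) hp0.le]
      have h2 : Ar * c = Ar ^ (1/p) := by
        have hppos := one_div_pos.mpr hp0
        rw [hc, ← Real.rpow_one_add' (le_of_lt hAr) (by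
          intro hcon
          rw [show (1:ℝ) + -(1/q) = 1/p by linarith] at hcon
          linarith)]
        congr 1
        linarith
      calc Ar ^ (1/p) = Ar * c := h2.symm
        _ = ∫ x, (h x ^ p * c) ∂μ := h1.symm
        _ ≤ ∫ x, f x * g x ∂μ := integral_mono_ae hI2 hI1 hfg_ae
        _ = ∫ x in uCube d, f x * g x := rfl
    have hle : ENNReal.ofReal (Ar ^ (1/p)) ≤ hatV d α f := by
      refine le_trans (ENNReal.ofReal_le_ofReal pairing) ?_
      rw [hatV]
      exact le_iSup_of_le g (le_iSup_of_le hg1 (le_iSup_of_le hg2 le_rfl))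
    -- conclude A ≤ (hatV)^p
    have hfin : A = (ENNReal.ofReal (Ar ^ (1/p))) ^ p := by
      rw [ENNReal.ofReal_rpow_of_pos (Real.rpow_pos_of_pos hAr _),
        ← Real.rpow_mul hAr.le, one_div_mul_cancel hpne, Real.rpow_one]
      exact (ENNReal.ofReal_toReal hAtop).symm
    rw [hfin]
    exact ENNReal.rpow_le_rpow hle hp0.le
  -- monotone convergence
  have hsup : ∀ x, (⨆ N : ℕ, (ENNReal.ofReal (min |f' x| N)) ^ p)
      = (ENNReal.ofReal |f' x|) ^ p := by
    intro x
    apply le_antisymm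
    · exact iSup_le fun N => ENNReal.rpow_le_rpow
        (ENNReal.ofReal_le_ofReal (min_le_left _ _)) hp0.le
    · obtain ⟨N, hN⟩ := exists_nat_ge |f' x|
      have : (ENNReal.ofReal (min |f' x| N)) ^ p = (ENNReal.ofReal |f' x|) ^ p := by
        rw [min_eq_left hN]
      exact this ▸ le_iSup (fun N : ℕ => (ENNReal.ofReal (min |f' x| N)) ^ p) N
  have hmono : Monotone fun N : ℕ => fun x => (ENNReal.ofReal (min |f' x| N)) ^ p := by
    intro N M hNM
    intro x
    apply ENNReal.rpow_le_rpow _ hp0.le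
    apply ENNReal.ofReal_le_ofReal
    exact min_le_min le_rfl (by exact_mod_cast hNM)
  have hMCT : (∫⁻ x, (ENNReal.ofReal |f' x|) ^ p ∂μ)
      = ⨆ N : ℕ, ∫⁻ x, (ENNReal.ofReal (min |f' x| N)) ^ p ∂μ := by
    rw [← lintegral_iSup (fun N => ((hf'm.abs.min measurable_const).ennreal_ofReal.pow_const _))
      hmono]
    exact lintegral_congr fun x => (hsup x).symm
  have hmain : (∫⁻ x, (ENNReal.ofReal |f' x|) ^ p ∂μ) ≤ (hatV d α f) ^ p := by
    rw [hMCT]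
    exact iSup_le key
  have hnorm : (∫⁻ x, (‖f x‖₊ : ℝ≥0∞) ^ p ∂μ) ≤ (hatV d α f) ^ p := by
    refine le_trans (le_of_eq ?_) hmain
    apply lintegral_congr_ae
    filter_upwards [hff'] with x hx
    rw [show (‖f x‖₊ : ℝ≥0∞) = ‖f x‖ₑ from rfl, Real.enorm_eq_ofReal_abs, hx]
  -- assemble
  set P : ℝ≥0∞ := ENNReal.ofReal (1 / ((α + (d : ℝ) - 1) / d)) with hP
  have hPp : P = ENNReal.ofReal p := rfl
  have hP0 : P ≠ 0 := by
    rw [hPp]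
    simp only [ne_eq, ENNReal.ofReal_eq_zero, not_le]
    exact hp0
  have hPtop : P ≠ ⊤ := ENNReal.ofReal_ne_top
  have hPtoReal : P.toReal = p := by rw [hPp, ENNReal.toReal_ofReal hp0.le]
  have hsnorm : eLpNorm f P μ ≤ hatV d α f := by
    rw [eLpNorm_eq_lintegral_rpow_enorm_toReal hP0 hPtop, hPtoReal]
    calc (∫⁻ x, (‖f x‖₊ : ℝ≥0∞) ^ p ∂μ) ^ (1/p)
        ≤ ((hatV d α f) ^ p) ^ (1/p) := ENNReal.rpow_le_rpow hnorm (by positivity)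
      _ = hatV d α f := by
          rw [← ENNReal.rpow_mul, mul_one_div_cancel hpne, ENNReal.rpow_one]
  exact ⟨⟨hf.1, lt_of_le_of_lt hsnorm hV⟩, hsnorm⟩

end
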